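/- Let γ = 0 and d = 0, and let L > 0. Then Λ = 0 is NOT an eigenvalue of the linearisation L_pin about the unique pinned fluxon for parameters (L, 0, 0); zero is an eigenvalue of the linearisation about the stationary sine-Gordon fluxon φ₀ only in the defect-free case L = 0 (where the eigenfunction is φ₀'). -/

import Mathlib

open Real Filter Topology

/-- The piecewise-constant Josephson tunneling critical current:
`D(x) = d` for `|x| < L` and `D(x) = 1` for `|x| > L`. -/
noncomputable def Dfun (L d : ℝ) (x : ℝ) : ℝ := if |x| < L then d else 1

/-- A pinned fluxon for parameters `(L, d, γ)`. -/
def IsPinnedFluxon (L d γ : ℝ) (φ : ℝ → ℝ) : Prop :=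
  ContDiff ℝ 1 φ ∧
  (∀ x : ℝ, x ≠ -L → x ≠ L →
    ∃ φ'' : ℝ, HasDerivAt (deriv φ) φ'' x ∧
      φ'' - Dfun L d x * Real.sin (φ x) + γ = 0) ∧
  Tendsto φ atBot (𝓝 (Real.arcsin γ)) ∧
  Tendsto φ atTop (𝓝 (Real.arcsin γ + 2 * π)) ∧
  Tendsto (deriv φ) atBot (𝓝 0) ∧
  Tendsto (deriv φ) atTop (𝓝 0)

/-- `ψ` is an eigenfunction of the linearisation about `φpin` with eigenvalue `Λ`. -/
def IsEigenfun (L d γ : ℝ) (φpin : ℝ → ℝ) (Λ : ℝ) (ψ : ℝ → ℝ) : Prop :=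
  ψ ≠ 0 ∧ ContDiff ℝ 1 ψ ∧
  (∀ x : ℝ, x ≠ -L → x ≠ L →
    ∃ ψ'' : ℝ, HasDerivAt (deriv ψ) ψ'' x ∧
      ψ'' - Dfun L d x * Real.cos (φpin x) * ψ x = Λ * ψ x) ∧
  Tendsto ψ atBot (𝓝 0) ∧ Tendsto ψ atTop (𝓝 0) ∧
  Tendsto (deriv ψ) atBot (𝓝 0) ∧ Tendsto (deriv ψ) atTop (𝓝 0)

/-- `Λ` is an eigenvalue of the linearisation `L_pin` about the pinned fluxon `φpin`. -/
def IsEigenvalue (L d γ : ℝ) (φpin : ℝ → ℝ) (Λ : ℝ) : Prop :=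
  ∃ ψ : ℝ → ℝ, IsEigenfun L d γ φpin Λ ψ

/-- The stationary sine-Gordon fluxon `φ₀(ξ) = 4 arctan(e^ξ)`. -/
noncomputable def φ₀ (ξ : ℝ) : ℝ := 4 * Real.arctan (Real.exp ξ)

/-!
With `d = γ = 0` a pinned fluxon is affine on `[-L, L]` and solves the pendulum equation
`φ'' = sin φ` outside. On each tail the energy `φ'² + 2 cos φ` equals its value `2` at infinity,
and a Gronwall argument for `1 - cos φ` shows that `φ'` vanishes nowhere on a tail unless `φ` is
constant there. This forces `φ'(±L) = p > 0`, `φ(-L) ∈ (0, π)` and `φ(L) = 2π - φ(-L)`.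
For a zero mode `ψ` the Wronskian `ψ' φ' - ψ sin φ` vanishes on both tails; evaluated at `±L`,
together with `ψ` being affine in the middle, it forces `ψ(L) = ψ'(L) = 0`, and then `ψ / φ'` is
constant zero on the tails. Left tails are treated as right tails of `x ↦ φ (-x)`, `x ↦ ψ (-x)`,
since both equations are invariant under reflection.

For `L = 0` the fluxon satisfies the first integral `φ₀' = 2 sin (φ₀ / 2)`, hence `φ₀'' = sin φ₀`,
and differentiating once more shows that `φ₀'` solves the linearised equation.
-/

open Set

section Calculus

variable {f f' : ℝ → ℝ} {a b c K : ℝ}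

lemma eq_of_hasDerivAt_zero (hab : a ≤ b) (hf : ContinuousOn f (Icc a b))
    (hd : ∀ x ∈ Ioo a b, HasDerivAt f 0 x) : f b = f a := by
  rcases hab.eq_or_lt with rfl | hab
  · rfl
  obtain ⟨x, -, hx⟩ := exists_hasDerivAt_eq_slope f (fun _ ↦ 0) hab hf hd
  rw [eq_comm, div_eq_zero_iff, sub_eq_zero] at hx
  exact hx.resolve_right (sub_ne_zero.2 hab.ne')

lemma eq_of_hasDerivAt_zero_of_tendsto (hf : ContinuousOn f (Ici a))
    (hd : ∀ x ∈ Ioi a, HasDerivAt f 0 x) (hc : Tendsto f atTop (𝓝 c)) :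
    ∀ x ∈ Ici a, f x = c := by
  have hconst : ∀ x ∈ Ici a, f x = f a := fun x hx ↦
    eq_of_hasDerivAt_zero hx (hf.mono Icc_subset_Ici_self) fun y hy ↦ hd y hy.1
  have hfa : f a = c :=
    tendsto_nhds_unique (tendsto_const_nhds.congr' <| (eventually_ge_atTop a).mono fun x hx ↦
      (hconst x hx).symm) hc
  intro x hx
  rw [hconst x hx, hfa]

lemma deriv_eq_and_eq_add_mul_of_hasDerivAt_deriv_zero (hf : ContDiff ℝ 1 f)
    (hd : ∀ x ∈ Ioo a b, HasDerivAt (deriv f) 0 x) :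
    ∀ x ∈ Icc a b, deriv f x = deriv f a ∧ f x = f a + deriv f a * (x - a) := by
  intro x hx
  have hderiv : ∀ y ∈ Icc a x, deriv f y = deriv f a := fun y hy ↦
    eq_of_hasDerivAt_zero hy.1 (hf.continuous_deriv le_rfl).continuousOn
      fun z hz ↦ hd z ⟨hz.1, hz.2.trans_le (hy.2.trans hx.2)⟩
  refine ⟨hderiv x ⟨hx.1, le_rfl⟩, ?_⟩
  have := eq_of_hasDerivAt_zero (f := fun y ↦ f y - deriv f a * y) hx.1
    (hf.continuous.sub (continuous_const_mul _)).continuousOn fun y hy ↦ by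
      have hf' := (hf.differentiable one_ne_zero y).hasDerivAt
      simpa [hderiv y (Ioo_subset_Icc_self hy)] using
        hf'.fun_sub ((hasDerivAt_id' y).const_mul (deriv f a))
  linarith

lemma eq_zero_of_abs_deriv_le_of_eq_zero_left (hab : a ≤ b)
    (hd : ∀ x ∈ Icc a b, HasDerivAt f (f' x) x) (hK : ∀ x ∈ Icc a b, |f' x| ≤ K * |f x|)
    (ha : f a = 0) : f b = 0 := by
  have := norm_le_gronwallBound_of_norm_deriv_right_le (δ := 0) (ε := 0)
    (fun x hx ↦ (hd x hx).continuousAt.continuousWithinAt)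
    (fun x hx ↦ (hd x (Ico_subset_Icc_self hx)).hasDerivWithinAt)
    (by simp [ha]) (fun x hx ↦ by simpa using hK x (Ico_subset_Icc_self hx)) b ⟨hab, le_rfl⟩
  simpa [gronwallBound_ε0_δ0] using this

lemma eq_zero_of_abs_deriv_le_of_eq_zero_right (hab : a ≤ b)
    (hd : ∀ x ∈ Icc a b, HasDerivAt f (f' x) x) (hK : ∀ x ∈ Icc a b, |f' x| ≤ K * |f x|)
    (hb : f b = 0) : f a = 0 := by
  have hmem : ∀ x ∈ Icc (-b) (-a), -x ∈ Icc a b := fun x hx ↦ ⟨le_neg.2 hx.2, neg_le.1 hx.1⟩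
  simpa using eq_zero_of_abs_deriv_le_of_eq_zero_left (f := fun x ↦ f (-x))
    (f' := fun x ↦ -f' (-x)) (K := K) (neg_le_neg hab)
    (fun x hx ↦ by
      simpa [Function.comp_def] using (hd (-x) (hmem x hx)).comp x (hasDerivAt_neg x))
    (fun x hx ↦ by simpa using hK (-x) (hmem x hx)) (by simpa using hb)

theorem Set.OrdConnected.eq_zero_of_abs_deriv_le {s : Set ℝ} (hs : s.OrdConnected)
    (hd : ∀ x ∈ s, HasDerivAt f (f' x) x) (hK : ∀ x ∈ s, |f' x| ≤ K * |f x|) {x₀ : ℝ}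
    (hx₀ : x₀ ∈ s) (h₀ : f x₀ = 0) : ∀ x ∈ s, f x = 0 := by
  intro x hx
  rcases le_total x₀ x with h | h
  · exact eq_zero_of_abs_deriv_le_of_eq_zero_left h (fun y hy ↦ hd y (hs.out hx₀ hx hy))
      (fun y hy ↦ hK y (hs.out hx₀ hx hy)) h₀
  · exact eq_zero_of_abs_deriv_le_of_eq_zero_right h (fun y hy ↦ hd y (hs.out hx hx₀ hy))
      (fun y hy ↦ hK y (hs.out hx hx₀ hy)) h₀

lemma deriv_comp_neg' : (deriv fun x ↦ f (-x)) = fun x ↦ -deriv f (-x) :=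
  funext (deriv_comp_neg f)

lemma hasDerivAt_deriv_comp_neg {x y : ℝ} (h : HasDerivAt (deriv f) y (-x)) :
    HasDerivAt (deriv fun t ↦ f (-t)) y x := by
  rw [deriv_comp_neg']
  simpa [Function.comp_def] using (h.comp x (hasDerivAt_neg x)).fun_neg

end Calculus

structure IsFluxonTail (L θ : ℝ) (φ : ℝ → ℝ) : Prop where
  contDiff : ContDiff ℝ 1 φ
  hasDerivAt_deriv : ∀ x, L < x → HasDerivAt (deriv φ) (sin (φ x)) x
  tendsto : Tendsto φ atTop (𝓝 θ)
  tendsto_deriv : Tendsto (deriv φ) atTop (𝓝 0)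
  cos_eq_one : cos θ = 1

namespace IsFluxonTail

variable {L θ : ℝ} {φ : ℝ → ℝ}

lemma hasDerivAt (h : IsFluxonTail L θ φ) (x : ℝ) : HasDerivAt φ (deriv φ x) x :=
  (h.contDiff.differentiable one_ne_zero x).hasDerivAt

lemma neg (h : IsFluxonTail L θ φ) : IsFluxonTail L (-θ) (fun x ↦ -φ x) where
  contDiff := h.contDiff.neg
  hasDerivAt_deriv x hx := by
    simpa [deriv.fun_neg] using (h.hasDerivAt_deriv x hx).fun_neg
  tendsto := h.tendsto.neg
  tendsto_deriv := by simpa [deriv.fun_neg] using h.tendsto_deriv.neg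
  cos_eq_one := by rw [cos_neg, h.cos_eq_one]

lemma sq_deriv (h : IsFluxonTail L θ φ) : ∀ x ∈ Ici L, deriv φ x ^ 2 = 2 * (1 - cos (φ x)) := by
  have henergy := eq_of_hasDerivAt_zero_of_tendsto (f := fun x ↦ deriv φ x ^ 2 + 2 * cos (φ x))
    ((h.contDiff.continuous_deriv le_rfl).pow 2 |>.add
      (continuous_const.mul (continuous_cos.comp h.contDiff.continuous))).continuousOn
    (fun x hx ↦ by
      simpa using ((h.hasDerivAt_deriv x hx).pow 2).fun_add
        (((hasDerivAt_cos (φ x)).comp x (h.hasDerivAt x)).const_mul 2) |>.congr_deriv (by ring))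
    (by simpa [h.cos_eq_one] using
      (h.tendsto_deriv.pow 2).add ((continuous_cos.tendsto θ).comp h.tendsto |>.const_mul 2))
  intro x hx
  linarith [henergy x hx]

lemma forall_cos_eq_one (h : IsFluxonTail L θ φ) {x₀ : ℝ} (hx₀ : x₀ ∈ Ici L)
    (h₀ : cos (φ x₀) = 1) : ∀ x ∈ Ici L, cos (φ x) = 1 := by
  -- By the energy identity, `|(1 - cos φ)'| = |sin φ · φ'| ≤ 2 (1 - cos φ)`.
  have := ordConnected_Ici.eq_zero_of_abs_deriv_le (f := fun x ↦ 1 - cos (φ x))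
    (f' := fun x ↦ sin (φ x) * deriv φ x) (K := 2)
    (fun x _ ↦ by
      simpa using ((hasDerivAt_cos (φ x)).comp x (h.hasDerivAt x)).const_sub 1)
    (fun x hx ↦ by
      rw [← abs_two, ← abs_mul, ← sq_le_sq, mul_pow, h.sq_deriv x hx, sin_sq]
      nlinarith [cos_le_one (φ x), neg_one_le_cos (φ x),
        mul_nonneg (sq_nonneg (1 - cos (φ x))) (sub_nonneg.2 (cos_le_one (φ x)))])
    hx₀ (by simp [h₀])
  intro x hx
  linarith [this x hx]

lemma deriv_ne_zero (h : IsFluxonTail L θ φ) (hp : deriv φ L ≠ 0) :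
    ∀ x ∈ Ici L, deriv φ x ≠ 0 := by
  intro x hx hx₀
  have hcos := h.forall_cos_eq_one hx (by nlinarith [h.sq_deriv x hx]) L self_mem_Ici
  exact hp (pow_eq_zero_iff two_ne_zero |>.1 (by rw [h.sq_deriv L self_mem_Ici, hcos, sub_self,
    mul_zero]))

lemma eq_of_deriv_eq_zero (h : IsFluxonTail L θ φ) (hp : deriv φ L = 0) : φ L = θ := by
  have hcos := h.forall_cos_eq_one self_mem_Ici (by nlinarith [h.sq_deriv L self_mem_Ici])
  refine eq_of_hasDerivAt_zero_of_tendsto h.contDiff.continuous.continuousOn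
    (fun x hx ↦ ?_) h.tendsto L self_mem_Ici
  have := h.sq_deriv x (mem_Ici_of_Ioi hx)
  rw [hcos x (mem_Ici_of_Ioi hx), sub_self, mul_zero, pow_eq_zero_iff two_ne_zero] at this
  exact this ▸ h.hasDerivAt x

lemma le_of_deriv_pos (h : IsFluxonTail L θ φ) (hp : 0 < deriv φ L) : φ L ≤ θ := by
  have hpos : ∀ x ∈ Ici L, 0 < deriv φ x := by
    intro x hx
    by_contra! hx₀
    obtain ⟨y, hy, hy₀⟩ := isPreconnected_Ici.intermediate_value hx self_mem_Ici
      (h.contDiff.continuous_deriv le_rfl).continuousOn ⟨hx₀, hp.le⟩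
    exact h.deriv_ne_zero hp.ne' y hy hy₀
  have hmono : MonotoneOn φ (Ici L) :=
    monotoneOn_of_deriv_nonneg (convex_Ici L) h.contDiff.continuous.continuousOn
      (h.contDiff.differentiable one_ne_zero).differentiableOn
      fun x hx ↦ (hpos x (interior_subset hx)).le
  exact ge_of_tendsto h.tendsto <| (eventually_ge_atTop L).mono fun x hx ↦
    hmono self_mem_Ici hx hx

lemma le_of_deriv_neg (h : IsFluxonTail L θ φ) (hp : deriv φ L < 0) : θ ≤ φ L := by
  have := h.neg.le_of_deriv_pos (by simpa [deriv.fun_neg] using hp)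
  linarith

end IsFluxonTail

structure IsLinearizedTail (L : ℝ) (φ ψ : ℝ → ℝ) : Prop where
  contDiff : ContDiff ℝ 1 ψ
  hasDerivAt_deriv : ∀ x, L < x → HasDerivAt (deriv ψ) (cos (φ x) * ψ x) x
  tendsto : Tendsto ψ atTop (𝓝 0)
  tendsto_deriv : Tendsto (deriv ψ) atTop (𝓝 0)

namespace IsLinearizedTail

variable {L θ : ℝ} {φ ψ : ℝ → ℝ}

lemma wronskian_eq_zero (hψ : IsLinearizedTail L φ ψ) (hφ : IsFluxonTail L θ φ) :
    ∀ x ∈ Ici L, deriv ψ x * deriv φ x = ψ x * sin (φ x) := by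
  have hsin : Tendsto (fun x ↦ sin (φ x)) atTop (𝓝 0) := by
    simpa [Function.comp_def, sin_eq_zero_iff_cos_eq.2 (Or.inl hφ.cos_eq_one)] using
      (continuous_sin.tendsto θ).comp hφ.tendsto
  have hW := eq_of_hasDerivAt_zero_of_tendsto
    (f := fun x ↦ deriv ψ x * deriv φ x - ψ x * sin (φ x))
    ((hψ.contDiff.continuous_deriv le_rfl).mul (hφ.contDiff.continuous_deriv le_rfl) |>.sub
      (hψ.contDiff.continuous.mul (continuous_sin.comp hφ.contDiff.continuous))).continuousOn
    (fun x hx ↦ by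
      have hψ' := (hψ.contDiff.differentiable one_ne_zero x).hasDerivAt
      have := ((hψ.hasDerivAt_deriv x hx).fun_mul (hφ.hasDerivAt_deriv x hx)).fun_sub
        (hψ'.fun_mul ((hasDerivAt_sin (φ x)).comp x (hφ.hasDerivAt x)))
      exact this.congr_deriv (by simp only [Function.comp_apply]; ring))
    (by simpa using (hψ.tendsto_deriv.mul hφ.tendsto_deriv).sub (hψ.tendsto.mul hsin))
  intro x hx
  linarith [hW x hx]

lemma eq_zero (hψ : IsLinearizedTail L φ ψ) (hφ : IsFluxonTail L θ φ) (hp : deriv φ L ≠ 0)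
    (hψL : ψ L = 0) : ∀ x ∈ Ici L, ψ x = 0 := by
  have hne := hφ.deriv_ne_zero hp
  intro x hx
  -- The derivative of `ψ / φ'` is the Wronskian divided by `φ'²`.
  have hquot := eq_of_hasDerivAt_zero (f := fun x ↦ ψ x / deriv φ x) hx
    (hψ.contDiff.continuous.continuousOn.div
      (hφ.contDiff.continuous_deriv le_rfl).continuousOn fun y hy ↦ hne y hy.1)
    (fun y hy ↦ by
      have hyL : L < y := hy.1
      have := ((hψ.contDiff.differentiable one_ne_zero y).hasDerivAt).fun_div
        (hφ.hasDerivAt_deriv y hyL) (hne y hyL.le)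
      rwa [hψ.wronskian_eq_zero hφ y hyL.le, sub_self, zero_div] at this)
  simpa [hψL, hne x hx] using hquot

end IsLinearizedTail

lemma Dfun_of_abs_lt {L d x : ℝ} (h : |x| < L) : Dfun L d x = d := if_pos h

lemma Dfun_of_le_abs {L d x : ℝ} (h : L ≤ |x|) : Dfun L d x = 1 := if_neg h.not_gt

namespace IsPinnedFluxon

variable {L d γ : ℝ} {φ : ℝ → ℝ}

lemma hasDerivAt_deriv (h : IsPinnedFluxon L d γ φ) {x : ℝ} (hx : x ≠ -L) (hx' : x ≠ L) :
    HasDerivAt (deriv φ) (Dfun L d x * sin (φ x) - γ) x := by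
  obtain ⟨φ'', hφ'', he⟩ := h.2.1 x hx hx'
  exact hφ''.congr_deriv (by linarith)

lemma isFluxonTail (h : IsPinnedFluxon L d 0 φ) (hL : 0 ≤ L) : IsFluxonTail L (2 * π) φ where
  contDiff := h.1
  hasDerivAt_deriv x hx := by
    simpa [Dfun_of_le_abs (hx.le.trans (le_abs_self x))] using
      h.hasDerivAt_deriv (by linarith) hx.ne'
  tendsto := by simpa using h.2.2.2.1
  tendsto_deriv := h.2.2.2.2.2
  cos_eq_one := cos_two_pi

lemma isFluxonTail_comp_neg (h : IsPinnedFluxon L d 0 φ) (hL : 0 ≤ L) :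
    IsFluxonTail L 0 (fun x ↦ φ (-x)) where
  contDiff := h.1.comp contDiff_neg
  hasDerivAt_deriv x hx := hasDerivAt_deriv_comp_neg <| by
    simpa [Dfun_of_le_abs (show L ≤ |-x| by rw [abs_neg]; exact hx.le.trans (le_abs_self x))] using
      h.hasDerivAt_deriv (x := -x) (by linarith) (by linarith)
  tendsto := by simpa using h.2.2.1
  tendsto_deriv := by
    simpa [deriv_comp_neg'] using (h.2.2.2.2.1.comp tendsto_neg_atTop_atBot).neg
  cos_eq_one := cos_zero

lemma hasDerivAt_deriv_of_mem_Ioo (h : IsPinnedFluxon L 0 0 φ) :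
    ∀ x ∈ Ioo (-L) L, HasDerivAt (deriv φ) 0 x := fun x hx ↦ by
  simpa [Dfun_of_abs_lt (abs_lt.2 hx)] using h.hasDerivAt_deriv hx.1.ne' hx.2.ne

end IsPinnedFluxon

namespace IsEigenfun

variable {L d γ Λ : ℝ} {φ ψ : ℝ → ℝ}

lemma hasDerivAt_deriv (h : IsEigenfun L d γ φ Λ ψ) {x : ℝ} (hx : x ≠ -L) (hx' : x ≠ L) :
    HasDerivAt (deriv ψ) ((Dfun L d x * cos (φ x) + Λ) * ψ x) x := by
  obtain ⟨ψ'', hψ'', he⟩ := h.2.2.1 x hx hx'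
  exact hψ''.congr_deriv (by linarith)

lemma isLinearizedTail (h : IsEigenfun L d γ φ 0 ψ) (hL : 0 ≤ L) : IsLinearizedTail L φ ψ where
  contDiff := h.2.1
  hasDerivAt_deriv x hx := by
    simpa [Dfun_of_le_abs (hx.le.trans (le_abs_self x))] using
      h.hasDerivAt_deriv (by linarith) hx.ne'
  tendsto := h.2.2.2.2.1
  tendsto_deriv := h.2.2.2.2.2.2

lemma isLinearizedTail_comp_neg (h : IsEigenfun L d γ φ 0 ψ) (hL : 0 ≤ L) :
    IsLinearizedTail L (fun x ↦ φ (-x)) (fun x ↦ ψ (-x)) where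
  contDiff := h.2.1.comp contDiff_neg
  hasDerivAt_deriv x hx := hasDerivAt_deriv_comp_neg <| by
    simpa [Dfun_of_le_abs (show L ≤ |-x| by rw [abs_neg]; exact hx.le.trans (le_abs_self x))] using
      h.hasDerivAt_deriv (x := -x) (by linarith) (by linarith)
  tendsto := h.2.2.2.1.comp tendsto_neg_atTop_atBot
  tendsto_deriv := by
    simpa [deriv_comp_neg'] using (h.2.2.2.2.2.1.comp tendsto_neg_atTop_atBot).neg

lemma hasDerivAt_deriv_of_mem_Ioo (h : IsEigenfun L 0 γ φ 0 ψ) :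
    ∀ x ∈ Ioo (-L) L, HasDerivAt (deriv ψ) 0 x := fun x hx ↦ by
  simpa [Dfun_of_abs_lt (abs_lt.2 hx)] using h.hasDerivAt_deriv hx.1.ne' hx.2.ne

end IsEigenfun

lemma eq_two_pi_sub_of_cos_eq {a b : ℝ} (ha : 0 < a) (hab : a < b) (hb : b < 2 * π)
    (h : cos a = cos b) : b = 2 * π - a := by
  obtain ⟨k, hk | hk⟩ := cos_eq_cos_iff.1 h
  · have h0 : (0 : ℝ) < k := by nlinarith [pi_pos]
    have h1 : (k : ℝ) < 1 := by nlinarith [pi_pos]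
    norm_cast at h0 h1
    omega
  · have h0 : (0 : ℝ) < k := by nlinarith [pi_pos]
    have h2 : (k : ℝ) < 2 := by nlinarith [pi_pos]
    norm_cast at h0 h2
    obtain rfl : k = 1 := by omega
    simpa using hk

namespace IsPinnedFluxon

variable {L : ℝ} {φ : ℝ → ℝ}

theorem deriv_pos_and_eq_two_pi_sub (h : IsPinnedFluxon L 0 0 φ) (hL : 0 < L) :
    0 < deriv φ L ∧ φ (-L) ∈ Ioo 0 π ∧ φ L = 2 * π - φ (-L) := by
  have hR := h.isFluxonTail hL.le
  have hL' := h.isFluxonTail_comp_neg hL.le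
  obtain ⟨hderiv, hlin⟩ := deriv_eq_and_eq_add_mul_of_hasDerivAt_deriv_zero h.1
    h.hasDerivAt_deriv_of_mem_Ioo L (right_mem_Icc.2 (neg_le_self hL.le))
  have hderiv' : deriv (fun x ↦ φ (-x)) L = -deriv φ L := by rw [deriv_comp_neg, hderiv]
  have hER := hR.sq_deriv L self_mem_Ici
  have hEL := hL'.sq_deriv L self_mem_Ici
  rw [hderiv', neg_sq] at hEL
  rw [← hderiv] at hlin
  rcases lt_trichotomy (deriv φ L) 0 with hneg | hzero | hpos
  · have h2π := hR.le_of_deriv_neg hneg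
    have h0 := hL'.le_of_deriv_pos (by rw [hderiv']; linarith)
    nlinarith [pi_pos]
  · have h2π := hR.eq_of_deriv_eq_zero hzero
    have h0 := hL'.eq_of_deriv_eq_zero (by rw [hderiv', hzero, neg_zero])
    rw [hzero] at hlin
    linarith [pi_pos]
  · have h2π := hR.le_of_deriv_pos hpos
    have h0 := hL'.le_of_deriv_neg (by rw [hderiv']; linarith)
    have hcos : cos (φ L) < 1 := by nlinarith
    have hcos' : cos (φ (-L)) < 1 := by nlinarith
    have h2π' : φ L < 2 * π := h2π.lt_of_ne fun he ↦ by simp [he] at hcos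
    have h0' : 0 < φ (-L) := h0.lt_of_ne fun he ↦ by simp [← he] at hcos'
    have hlt : φ (-L) < φ L := by nlinarith [mul_pos hpos hL]
    have hsym := eq_two_pi_sub_of_cos_eq h0' hlt h2π' (by linarith)
    exact ⟨hpos, ⟨h0', by linarith⟩, hsym⟩

end IsPinnedFluxon

namespace IsEigenfun

variable {L γ : ℝ} {φ ψ : ℝ → ℝ}

lemma eq_zero_and_deriv_eq_zero_at (hψ : IsEigenfun L 0 γ φ 0 ψ) (hφ : IsPinnedFluxon L 0 0 φ)
    (hL : 0 < L) : ψ L = 0 ∧ deriv ψ L = 0 := by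
  obtain ⟨hp, ⟨hθ₀, hθπ⟩, hθL⟩ := hφ.deriv_pos_and_eq_two_pi_sub hL
  have hLmem : L ∈ Icc (-L) L := right_mem_Icc.2 (neg_le_self hL.le)
  have hφ' := (deriv_eq_and_eq_add_mul_of_hasDerivAt_deriv_zero hφ.1
    hφ.hasDerivAt_deriv_of_mem_Ioo L hLmem).1
  obtain ⟨hψ', hψL⟩ := deriv_eq_and_eq_add_mul_of_hasDerivAt_deriv_zero hψ.2.1
    hψ.hasDerivAt_deriv_of_mem_Ioo L hLmem
  have hWR := (hψ.isLinearizedTail hL.le).wronskian_eq_zero (hφ.isFluxonTail hL.le) L self_mem_Ici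
  have hWL := (hψ.isLinearizedTail_comp_neg hL.le).wronskian_eq_zero
    (hφ.isFluxonTail_comp_neg hL.le) L self_mem_Ici
  simp only [deriv_comp_neg, ← hφ', ← hψ'] at hWL
  rw [hθL, sin_two_pi_sub] at hWR
  rw [← hψ'] at hψL
  have hs : 0 < sin (φ (-L)) := sin_pos_of_pos_of_lt_pi hθ₀ hθπ
  -- The two Wronskian identities and `ψ(L) = ψ(-L) + 2L ψ'(L)` form a linear system for
  -- `ψ(±L), ψ'(L)` whose only solution is zero, since `φ'(L) + L sin φ(-L) > 0`.
  have hodd : ψ (-L) = -ψ L := mul_right_cancel₀ hs.ne' (by linarith)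
  have hψLa : ψ L = deriv ψ L * L := by linarith
  have ha : deriv ψ L * (deriv φ L + L * sin (φ (-L))) = 0 := by
    linear_combination hWR - sin (φ (-L)) * hψLa
  have ha0 := (mul_eq_zero.1 ha).resolve_right (by positivity)
  exact ⟨by rw [hψLa, ha0, zero_mul], ha0⟩

lemma eq_zero_of_eq_zero_at (hψ : IsEigenfun L 0 γ φ 0 ψ) (hφ : IsPinnedFluxon L 0 0 φ)
    (hL : 0 < L) (hp : deriv φ L ≠ 0) (h₀ : ψ L = 0) (h₀' : deriv ψ L = 0) : ψ = 0 := by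
  have hmid := deriv_eq_and_eq_add_mul_of_hasDerivAt_deriv_zero hψ.2.1
    hψ.hasDerivAt_deriv_of_mem_Ioo
  have hLmem : L ∈ Icc (-L) L := right_mem_Icc.2 (neg_le_self hL.le)
  obtain ⟨hψ', hψL⟩ := hmid L hLmem
  have ha : deriv ψ (-L) = 0 := hψ' ▸ h₀'
  have hψmL : ψ (-L) = 0 := by rw [ha, zero_mul, add_zero] at hψL; exact hψL ▸ h₀
  have hφ' := (deriv_eq_and_eq_add_mul_of_hasDerivAt_deriv_zero hφ.1
    hφ.hasDerivAt_deriv_of_mem_Ioo L hLmem).1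
  have hright := (hψ.isLinearizedTail hL.le).eq_zero (hφ.isFluxonTail hL.le) hp h₀
  have hleft := (hψ.isLinearizedTail_comp_neg hL.le).eq_zero (hφ.isFluxonTail_comp_neg hL.le)
    (by rw [deriv_comp_neg, ← hφ', neg_ne_zero]; exact hp) hψmL
  funext x
  rcases le_total L x with hx | hx
  · exact hright x hx
  rcases le_total x (-L) with hx' | hx'
  · simpa using hleft (-x) (le_neg.2 hx')
  · simpa [ha, hψmL] using (hmid x ⟨hx', hx⟩).2

end IsEigenfun

theorem IsPinnedFluxon.not_isEigenvalue_zero {L : ℝ} {φ : ℝ → ℝ} (hφ : IsPinnedFluxon L 0 0 φ)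
    (hL : 0 < L) : ¬ IsEigenvalue L 0 0 φ 0 := by
  rintro ⟨ψ, hψ⟩
  obtain ⟨h₀, h₀'⟩ := hψ.eq_zero_and_deriv_eq_zero_at hφ hL
  exact hψ.1 (hψ.eq_zero_of_eq_zero_at hφ hL (hφ.deriv_pos_and_eq_two_pi_sub hL).1.ne' h₀ h₀')

lemma sin_two_mul_arctan (y : ℝ) : sin (2 * arctan y) = 2 * y / (1 + y ^ 2) := by
  have h : √(1 + y ^ 2) ^ 2 = 1 + y ^ 2 := sq_sqrt (by positivity)
  rw [sin_two_mul, sin_arctan, cos_arctan]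
  field_simp
  rw [h]

lemma hasDerivAt_φ₀ (x : ℝ) : HasDerivAt φ₀ (2 * sin (φ₀ x / 2)) x := by
  refine (((hasDerivAt_arctan (exp x)).comp x (hasDerivAt_exp x)).const_mul 4).congr_deriv ?_
  rw [show φ₀ x / 2 = 2 * arctan (exp x) by unfold φ₀; ring, sin_two_mul_arctan]
  field_simp
  ring

lemma deriv_φ₀ : deriv φ₀ = fun x ↦ 2 * sin (φ₀ x / 2) :=
  funext fun x ↦ (hasDerivAt_φ₀ x).deriv

lemma hasDerivAt_deriv_φ₀ (x : ℝ) : HasDerivAt (deriv φ₀) (sin (φ₀ x)) x := by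
  rw [deriv_φ₀]
  refine ((((hasDerivAt_φ₀ x).div_const 2).sin).const_mul 2).congr_deriv ?_
  rw [show φ₀ x = 2 * (φ₀ x / 2) by ring, sin_two_mul]
  ring_nf

lemma deriv_deriv_φ₀ : deriv (deriv φ₀) = fun x ↦ sin (φ₀ x) :=
  funext fun x ↦ (hasDerivAt_deriv_φ₀ x).deriv

lemma tendsto_φ₀_atBot : Tendsto φ₀ atBot (𝓝 0) := by
  have := ((continuous_arctan.tendsto 0).comp tendsto_exp_atBot).const_mul 4
  rwa [arctan_zero, mul_zero] at this

lemma tendsto_φ₀_atTop : Tendsto φ₀ atTop (𝓝 (2 * π)) := by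
  have := ((tendsto_arctan_atTop.mono_right nhdsWithin_le_nhds).comp tendsto_exp_atTop).const_mul 4
  rwa [show 4 * (π / 2) = 2 * π by ring] at this

theorem isEigenfun_deriv_φ₀ : IsEigenfun 0 0 0 φ₀ 0 (deriv φ₀) := by
  have hcont : Continuous fun θ : ℝ ↦ 2 * sin (θ / 2) := by fun_prop
  refine ⟨fun h ↦ ?_, ?_, fun x _ _ ↦ ⟨cos (φ₀ x) * deriv φ₀ x, ?_, ?_⟩, ?_, ?_, ?_, ?_⟩
  · have h0 : 2 * sin (φ₀ 0 / 2) = 0 := by simpa [deriv_φ₀] using congrFun h 0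
    rw [show φ₀ 0 / 2 = π / 2 by simp [φ₀, arctan_one]; ring, sin_pi_div_two] at h0
    norm_num at h0
  · rw [deriv_φ₀]
    exact contDiff_const.mul (contDiff_sin.comp
      ((contDiff_const.mul (contDiff_arctan.comp contDiff_exp)).div_const 2))
  · rw [deriv_deriv_φ₀]
    exact (hasDerivAt_sin (φ₀ x)).comp x ((hasDerivAt_φ₀ x).congr_deriv (by rw [deriv_φ₀]))
  · simp [Dfun_of_le_abs (abs_nonneg x)]
  · simpa [deriv_φ₀, Function.comp_def] using (hcont.tendsto 0).comp tendsto_φ₀_atBot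
  · simpa [deriv_φ₀, Function.comp_def] using (hcont.tendsto (2 * π)).comp tendsto_φ₀_atTop
  · simpa [deriv_deriv_φ₀, Function.comp_def] using
      (continuous_sin.tendsto 0).comp tendsto_φ₀_atBot
  · simpa [deriv_deriv_φ₀, Function.comp_def] using
      (continuous_sin.tendsto (2 * π)).comp tendsto_φ₀_atTop

/-- For `γ = 0`, `d = 0` and `L > 0`, `Λ = 0` is not an eigenvalue of the linearisation
about any pinned fluxon for parameters `(L, 0, 0)`; zero is an eigenvalue of the
linearisation about the stationary sine-Gordon fluxon `φ₀` in the defect-free case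
`L = 0`, where the eigenfunction is `φ₀'`. -/
theorem stmt8 :
    (∀ L : ℝ, 0 < L → ∀ φ : ℝ → ℝ, IsPinnedFluxon L 0 0 φ →
      ¬ IsEigenvalue L 0 0 φ 0) ∧
    IsEigenfun 0 0 0 φ₀ 0 (deriv φ₀) :=
  ⟨fun _ hL _ hφ ↦ hφ.not_isEigenvalue_zero hL, isEigenfun_deriv_φ₀⟩
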